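/- arXiv:2011.04136 — 3 statements merged into one kernel-verified Lean document; each statement's English description precedes it below -/
import Mathlib

section
/- For any n ≥ 2 and any Λ > 0, there exists an embedded self-shrinker Σ ⊂ ℝ^{n+1} with entropy λ(Σ) > Λ and finite index, given that: (a) for 3 ≤ n+1 ≤ 7 there exist embedded self-shrinkers Σ_k in ℝ^{n+1} with entropy growing like k^{1/(n+1)} and index(Σ_k) ≤ k; (b) λ(Σ × ℝ) = λ(Σ); (c) Σ × ℝ is a self-shrinker iff Σ is; and (d) if Σ has finite index then Σ × ℝ has finite index. -/
open Filter

theorem exists_one_le_lt_mul_natCast_rpow {c p : ℝ} (hc : 0 < c) (hp : 0 < p) (Λ : ℝ) :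
    ∃ k : ℕ, 1 ≤ k ∧ Λ < c * (k : ℝ) ^ p := by
  have htendsto : Tendsto (fun k : ℕ => c * (k : ℝ) ^ p) atTop atTop :=
    ((tendsto_rpow_atTop hp).comp tendsto_natCast_atTop_atTop).const_mul_atTop hc
  exact ((eventually_ge_atTop 1).and (htendsto.eventually_gt_atTop Λ)).exists

theorem exists_of_le_of_exists_succ {E : ℕ → Type*} {Q : ∀ m, E m → Prop}
    (hstep : ∀ m x, Q m x → ∃ y, Q (m + 1) y) {d n : ℕ} (hdn : d ≤ n) (hd : ∃ x, Q d x) :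
    ∃ x, Q n x := by
  induction n, hdn using Nat.le_induction with
  | base => exact hd
  | succ m _ ih =>
    obtain ⟨x, hx⟩ := ih
    exact hstep m x hx

/-- Existence of embedded self-shrinkers with arbitrarily large entropy and finite index in
every dimension `n ≥ 2`, deduced from: (a) in dimensions `3 ≤ n+1 ≤ 7` there are
self-shrinkers `Σ_k` with entropy growing like `k^{1/(n+1)}` and `index(Σ_k) ≤ k`;
(b) taking a product with `ℝ` preserves entropy; (c) products with `ℝ` are self-shrinkers
iff the factor is; (d) products with `ℝ` preserve finiteness of the index. -/
theorem large_entropy_finite_index_shrinker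
    (shr : ∀ m : ℕ, Set (EuclideanSpace ℝ (Fin m)) → Prop)
    (ent : ∀ m : ℕ, Set (EuclideanSpace ℝ (Fin m)) → ℝ)
    (idx : ∀ m : ℕ, Set (EuclideanSpace ℝ (Fin m)) → ℕ∞)
    (Pm : ∀ m : ℕ, Set (EuclideanSpace ℝ (Fin m)) → Set (EuclideanSpace ℝ (Fin (m + 1))))
    (hb : ∀ (m : ℕ) (S : Set (EuclideanSpace ℝ (Fin m))), ent (m + 1) (Pm m S) = ent m S)
    (hc : ∀ (m : ℕ) (S : Set (EuclideanSpace ℝ (Fin m))), shr (m + 1) (Pm m S) ↔ shr m S)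
    (hd : ∀ (m : ℕ) (S : Set (EuclideanSpace ℝ (Fin m))),
      idx m S < ⊤ → idx (m + 1) (Pm m S) < ⊤)
    (ha : ∀ n : ℕ, 2 ≤ n → n ≤ 6 →
      ∃ S : ℕ → Set (EuclideanSpace ℝ (Fin (n + 1))),
        (∀ k : ℕ, shr (n + 1) (S k) ∧ idx (n + 1) (S k) ≤ (k : ℕ∞)) ∧
          ∃ c : ℝ, 0 < c ∧ ∀ k : ℕ, 1 ≤ k →
            c * (k : ℝ) ^ ((1 : ℝ) / ((n : ℝ) + 1)) ≤ ent (n + 1) (S k)) :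
    ∀ n : ℕ, 2 ≤ n → ∀ Λ : ℝ, 0 < Λ →
      ∃ S : Set (EuclideanSpace ℝ (Fin (n + 1))),
        shr (n + 1) S ∧ Λ < ent (n + 1) S ∧ idx (n + 1) S < ⊤ := by
  intro n hn Λ _
  set d := min n 6
  have hbase : ∃ S, shr (d + 1) S ∧ Λ < ent (d + 1) S ∧ idx (d + 1) S < ⊤ := by
    obtain ⟨S, hS, c, hc0, hent⟩ := ha d (le_min hn (by norm_num)) (min_le_right n 6)
    obtain ⟨k, hk, hΛ⟩ :=
      exists_one_le_lt_mul_natCast_rpow hc0 (by positivity : (0 : ℝ) < 1 / ((d : ℝ) + 1)) Λ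
    exact ⟨S k, (hS k).1, hΛ.trans_le (hent k hk), (hS k).2.trans_lt (ENat.natCast_lt_top k)⟩
  exact exists_of_le_of_exists_succ (Q := fun m S => shr m S ∧ Λ < ent m S ∧ idx m S < ⊤)
    (fun m S ⟨hshr, hent, hidx⟩ => ⟨Pm m S, (hc m S).2 hshr, (hb m S).symm ▸ hent, hd m S hidx⟩)
    (Nat.succ_le_succ (min_le_left n 6)) hbase
end

section
/- Let u₁ be a smooth solution on a domain U ⊂ ∂M of an elliptic equation L u₁ = H_{∂M}(x) ± h(x, u₁(x)) with H_{∂M}(x) ± h(x, u₁(x)) ≠ 0 for all x ∈ U, where at a point p one has u₁(p) = 0 and ∇u₁(p) = 0. Then the Hessian of u₁ at p has rank at least 1, and consequently the touching set {x ∈ U : u₁(x) = 0, ∇u₁(x) = 0} is contained, near p, in an (n-1)-dimensional submanifold. -/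
/-- If a smooth graph function `u₁` on a domain `U ⊂ ∂M ≅ ℝⁿ` satisfies a second order
linear elliptic equation `L u₁ = H_{∂M} ± h(·, u₁)` whose right-hand side `g` vanishes
nowhere on `U` (here `L u₁ = T(Hess u₁) + B(∇u₁) + c·u₁`), and `u₁(p) = 0`, `∇u₁(p) = 0`,
then the Hessian of `u₁` at `p` has rank at least one (i.e. is nonzero), and near `p` the
touching set `{u₁ = 0, ∇u₁ = 0}` is contained in an `(n-1)`-dimensional submanifold,
namely a regular level set `{F = 0}` of a submersion `F`. -/
theorem touching_set_estimate {n : ℕ} (U : Set (EuclideanSpace ℝ (Fin n)))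
    (hU : IsOpen U) (p : EuclideanSpace ℝ (Fin n)) (hp : p ∈ U)
    (u1 g : EuclideanSpace ℝ (Fin n) → ℝ)
    (hu1 : ContDiff ℝ (⊤ : ℕ∞) u1)
    (T : EuclideanSpace ℝ (Fin n) →
      ((EuclideanSpace ℝ (Fin n) →L[ℝ] EuclideanSpace ℝ (Fin n) →L[ℝ] ℝ) →ₗ[ℝ] ℝ))
    (B : EuclideanSpace ℝ (Fin n) → ((EuclideanSpace ℝ (Fin n) →L[ℝ] ℝ) →ₗ[ℝ] ℝ))
    (c : EuclideanSpace ℝ (Fin n) → ℝ)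
    (hLu : ∀ x ∈ U,
      T x (fderiv ℝ (fderiv ℝ u1) x) + B x (fderiv ℝ u1 x) + c x * u1 x = g x)
    (hg : ∀ x ∈ U, g x ≠ 0)
    (h0 : u1 p = 0) (h1 : fderiv ℝ u1 p = 0) :
    fderiv ℝ (fderiv ℝ u1) p ≠ 0 ∧
      ∃ V ∈ nhds p, ∃ F : EuclideanSpace ℝ (Fin n) → ℝ,
        ContDiff ℝ (⊤ : ℕ∞) F ∧ (∀ x ∈ V, fderiv ℝ F x ≠ 0) ∧
          ∀ x ∈ V, u1 x = 0 ∧ fderiv ℝ u1 x = 0 → F x = 0 := by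
  -- The Hessian at `p` is nonzero.
  have key := hLu p hp
  rw [h0, h1] at key
  simp only [map_zero, mul_zero, add_zero] at key
  have hHess : fderiv ℝ (fderiv ℝ u1) p ≠ 0 := by
    intro h
    rw [h, map_zero] at key
    exact hg p hp key.symm
  refine ⟨hHess, ?_⟩
  -- choose directions v, w with Hess v w ≠ 0
  obtain ⟨v, hv⟩ : ∃ v, fderiv ℝ (fderiv ℝ u1) p v ≠ 0 := by
    by_contra h
    push_neg at h
    exact hHess (ContinuousLinearMap.ext h)
  obtain ⟨w, hw⟩ : ∃ w, fderiv ℝ (fderiv ℝ u1) p v w ≠ 0 := by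
    by_contra h
    push_neg at h
    exact hv (ContinuousLinearMap.ext h)
  -- derivative of u1 is smooth
  have hDu : ContDiff ℝ (⊤ : ℕ∞) (fderiv ℝ u1) := hu1.fderiv_right (by simp)
  set F : EuclideanSpace ℝ (Fin n) → ℝ := fun x => fderiv ℝ u1 x w with hF_def
  have hF : ContDiff ℝ (⊤ : ℕ∞) F :=
    (ContinuousLinearMap.apply ℝ ℝ w).contDiff.comp hDu
  -- compute fderiv of F at p
  have hFd : HasFDerivAt F
      ((ContinuousLinearMap.apply ℝ ℝ w).comp (fderiv ℝ (fderiv ℝ u1) p)) p :=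
    (ContinuousLinearMap.apply ℝ ℝ w).hasFDerivAt.comp p
      ((hDu.differentiable (by simp)) p).hasFDerivAt
  have hFdp : fderiv ℝ F p ≠ 0 := by
    rw [hFd.fderiv]
    intro h
    apply hw
    have := congrArg (fun (L : EuclideanSpace ℝ (Fin n) →L[ℝ] ℝ) => L v) h
    simpa using this
  -- the set where fderiv F ≠ 0 is open
  have hcont : Continuous (fderiv ℝ F) := (hF.fderiv_right (m := (⊤ : ℕ∞)) (by simp)).continuous
  set V : Set (EuclideanSpace ℝ (Fin n)) := {x | fderiv ℝ F x ≠ 0} with hV_def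
  have hVopen : IsOpen V := isOpen_compl_singleton.preimage hcont
  refine ⟨V, hVopen.mem_nhds hFdp, F, hF, fun x hx => hx, ?_⟩
  intro x _ ⟨_, hdx⟩
  simp only [hF_def, hdx]
  rfl
end

section
/- Let Γ be the space of smooth Riemannian metrics on a compact manifold with boundary (M^{n+1}, ∂M), 3 ≤ n+1 ≤ 7, and for C > 0 let Γ(C) be the set of metrics for which every almost properly embedded free boundary minimal hypersurface with Area ≤ C and index ≤ C is non-degenerate and proper. Then Γ(C) is open in the C^∞ topology, given the compactness theorem: any sequence of free boundary minimal hypersurfaces Σ_j in (M, ∂M, γ_j) with γ_j → γ smoothly, Area(Σ_j) ≤ C, Index(Σ_j) ≤ C, subconverges locally smoothly away from finitely many points to a free boundary minimal hypersurface Σ in (M, ∂M, γ) with Area ≤ C and Index ≤ C, and the convergence is smooth and Σ_j inherits non-degeneracy and properness whenever Σ is non-degenerate and proper. -/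
open Filter Topology

/-! If metrics `γⱼ ∉ Γ(C)` converge to `γ`, each carries a degenerate or non-proper hypersurface
with area and index `≤ C`. Compactness gives a limit hypersurface in `(M, ∂M, γ)` with the same
bounds; were it non-degenerate and proper, some `γⱼ`-hypersurface along the subsequence would
inherit both properties. So the complement of `Γ(C)` is sequentially closed, hence closed. -/

theorem isOpen_setOf_forall_good_of_inherited {X H : Type*} [TopologicalSpace X]
    [SequentialSpace X] (admissible good : X → H → Prop)
    (inherit : ∀ (x : X) (xs : ℕ → X) (Ss : ℕ → H), Tendsto xs atTop (𝓝 x) →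
      (∀ j, admissible (xs j) (Ss j)) →
      ∃ S, admissible x S ∧ (good x S → ∃ j, good (xs j) (Ss j))) :
    IsOpen {x | ∀ S, admissible x S → good x S} := by
  refine isClosed_compl_iff.mp (IsSeqClosed.isClosed fun {xs x} hbad hlim hgood => ?_)
  simp only [Set.mem_compl_iff, Set.mem_ofPred_eq, not_forall] at hbad
  choose Ss hadm hnot using hbad
  obtain ⟨S, hS, hinherit⟩ := inherit x xs Ss hlim hadm
  obtain ⟨j, hj⟩ := hinherit (hgood S hS)
  exact hnot j hj

theorem openness_of_bumpy_proper_metrics_general {G H : Type*} [MetricSpace G]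
    (FB : G → Set H) (area index : G → H → ℝ)
    (nondeg proper : G → H → Prop) (C : ℝ)
    (compactness : ∀ (γ : G) (γseq : ℕ → G) (Sseq : ℕ → H),
      Tendsto γseq atTop (nhds γ) →
      (∀ j, Sseq j ∈ FB (γseq j) ∧ area (γseq j) (Sseq j) ≤ C ∧
        index (γseq j) (Sseq j) ≤ C) →
      ∃ (φ : ℕ → ℕ) (Slim : H), StrictMono φ ∧ Slim ∈ FB γ ∧
        area γ Slim ≤ C ∧ index γ Slim ≤ C ∧
        (nondeg γ Slim ∧ proper γ Slim →
          ∀ᶠ j in atTop, nondeg (γseq (φ j)) (Sseq (φ j)) ∧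
            proper (γseq (φ j)) (Sseq (φ j)))) :
    IsOpen {γ : G | ∀ S ∈ FB γ, area γ S ≤ C → index γ S ≤ C →
      nondeg γ S ∧ proper γ S} := by
  have hopen := isOpen_setOf_forall_good_of_inherited
    (fun γ S => S ∈ FB γ ∧ area γ S ≤ C ∧ index γ S ≤ C) (fun γ S => nondeg γ S ∧ proper γ S)
    fun γ γseq Sseq hlim hadm => by
      obtain ⟨φ, Slim, -, hFB, harea, hindex, hinherit⟩ := compactness γ γseq Sseq hlim hadm
      exact ⟨Slim, ⟨hFB, harea, hindex⟩, fun hgood =>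
        let ⟨j, hj⟩ := (hinherit hgood).exists; ⟨φ j, hj⟩⟩
  simpa only [and_imp] using hopen

/-- Openness of the set `Γ(C)` of metrics for which every almost properly embedded free
boundary minimal hypersurface with area `≤ C` and index `≤ C` is non-degenerate and
proper, given the compactness theorem with inheritance of non-degeneracy and properness.
Here `G` is the (metrizable) space of smooth metrics on `(M, ∂M)`, `FB γ` is the set of
free boundary minimal hypersurfaces for the metric `γ`. -/
theorem openness_of_bumpy_proper_metrics {G H : Type*} [MetricSpace G]
    (FB : G → Set H) (area index : G → H → ℝ)
    (nondeg proper : G → H → Prop) (C : ℝ) (hC : 0 < C)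
    (compactness : ∀ (γ : G) (γseq : ℕ → G) (Sseq : ℕ → H),
      Tendsto γseq atTop (nhds γ) →
      (∀ j, Sseq j ∈ FB (γseq j) ∧ area (γseq j) (Sseq j) ≤ C ∧
        index (γseq j) (Sseq j) ≤ C) →
      ∃ (φ : ℕ → ℕ) (Slim : H), StrictMono φ ∧ Slim ∈ FB γ ∧
        area γ Slim ≤ C ∧ index γ Slim ≤ C ∧
        (nondeg γ Slim ∧ proper γ Slim →
          ∀ᶠ j in atTop, nondeg (γseq (φ j)) (Sseq (φ j)) ∧
            proper (γseq (φ j)) (Sseq (φ j)))) :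
    IsOpen {γ : G | ∀ S ∈ FB γ, area γ S ≤ C → index γ S ≤ C →
      nondeg γ S ∧ proper γ S} :=
  openness_of_bumpy_proper_metrics_general FB area index nondeg proper C compactness
end
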